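/- arXiv:1609.06579 — 2 statements merged into one kernel-verified Lean document; each statement's English description precedes it below -/
import Mathlib

section
/- Suppose the mapping is equitorsion, i.e. L̄^i_{[jk]} = L^i_{[jk]} on U for all i, j, k, and suppose P^i_{(jk)} = ω̄^i_{jk} − ω^i_{jk} with ω, ω̄ smooth and symmetric in j, k. Set ω_{(1)}^i_{jk} := L^i_{(jk)}, ω_{(2)}^i_{jk} := ω^i_{jk}, ω_{(3)}^i_{jk} := −(1/2) P^i_{(jk)} (barred analogues ω̄_{(1)} := L̄^i_{(jk)}, ω̄_{(2)} := ω̄^i_{jk}, ω̄_{(3)} := +(1/2) P^i_{(jk)}), and W̃_{(p)}^i_{jmn} := R^i_{jmn} − ω_{(p)}^i_{jm|n} + ω_{(p)}^i_{jn|m} + Σ_α (ω_{(p)}^α_{jm} ω_{(p)}^i_{αn} − ω_{(p)}^α_{jn} ω_{(p)}^i_{αm}). Then for all real numbers u, u', v, v', w, every p ∈ {1,2,3} and all choices q₁, q₂, q₃, r₁, r₂, r₃ ∈ {1,2}, the geometrical object W^i_{jmn} := W̃_{(p)}^i_{jmn} + u [ L^i_{[jm]|n} − Σ_α ω_{(q₁)}^i_{αn}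 L^α_{[jm]} + Σ_α ω_{(q₂)}^α_{jn} L^i_{[αm]} + Σ_α ω_{(q₃)}^α_{mn} L^i_{[jα]} ] + u' [ L^i_{[jn]|m} − Σ_α ω_{(r₁)}^i_{αm} L^α_{[jn]} + Σ_α ω_{(r₂)}^α_{jm} L^i_{[αn]} + Σ_α ω_{(r₃)}^α_{mn} L^i_{[jα]} ] + v Σ_α L^α_{[jm]} L^i_{[αn]} + v' Σ_α L^α_{[jn]} L^i_{[αm]} + w Σ_α L^α_{[mn]} L^i_{[αj]} is an invariant of the mapping: the object defined by the same formula from the barred data (with torsion L̄^i_{[jk]} = L^i_{[jk]}) coincides with W^i_{jmn} on U (Corollary 2.4, the equitorsion case). -/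
open scoped BigOperators

abbrev Pt (N : ℕ) := EuclideanSpace ℝ (Fin N)
abbrev Conn (N : ℕ) := Fin N → Fin N → Fin N → Pt N → ℝ

/-- partial derivative in the `l`-th coordinate direction -/
noncomputable def pd {N : ℕ} (l : Fin N) (f : Pt N → ℝ) (x : Pt N) : ℝ :=
  fderiv ℝ f x (EuclideanSpace.single l 1)

/-- symmetric part `L^i_{(jk)}` -/
noncomputable def symC {N : ℕ} (L : Conn N) : Conn N :=
  fun i j k x => (1/2) * (L i j k x + L i k j x)

/-- anti-symmetric (torsion) part `L^i_{[jk]}` -/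
noncomputable def torC {N : ℕ} (L : Conn N) : Conn N :=
  fun i j k x => (1/2) * (L i j k x - L i k j x)

/-- covariant derivative `a^i_{jk|l}` with respect to the symmetric part of `L` -/
noncomputable def covD {N : ℕ} (L A : Conn N) (i j k l : Fin N) (x : Pt N) : ℝ :=
  pd l (A i j k) x + ∑ α : Fin N, symC L i α l x * A α j k x
    - ∑ α : Fin N, symC L α j l x * A i α k x
    - ∑ α : Fin N, symC L α k l x * A i j α x

/-- covariant derivative `ρ_{j|l}` of a 1-form with respect to the symmetric part of `L` -/
noncomputable def covD1 {N : ℕ} (L : Conn N) (ρ : Fin N → Pt N → ℝ) (j l : Fin N)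
    (x : Pt N) : ℝ :=
  pd l (ρ j) x - ∑ α : Fin N, symC L α j l x * ρ α x

/-- curvature tensor `R^i_{jmn}` of the symmetric part of `L` -/
noncomputable def curv {N : ℕ} (L : Conn N) (i j m n : Fin N) (x : Pt N) : ℝ :=
  pd n (symC L i j m) x - pd m (symC L i j n) x
    + ∑ α : Fin N, (symC L α j m x * symC L i α n x - symC L α j n x * symC L i α m x)

/-- Ricci tensor `R_{jm} := Σ_α R^α_{jmα}` -/
noncomputable def ric {N : ℕ} (L : Conn N) (j m : Fin N) (x : Pt N) : ℝ :=
  ∑ α : Fin N, curv L α j m α x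

/-- all components of the family are smooth on `U` -/
def SmoothConn {N : ℕ} (U : Set (Pt N)) (L : Conn N) : Prop :=
  ∀ i j k, ContDiffOn ℝ (⊤ : ℕ∞) (L i j k) U

/-- Kronecker delta `δ^i_j` -/
noncomputable def kron {N : ℕ} (i j : Fin N) : ℝ := if i = j then 1 else 0

/-- selector `ω_{(q)}` for `q ∈ {1,2}`: `ω_{(1)} = L^i_{(jk)}`, `ω_{(2)} = ω`. -/
noncomputable def omSel {N : ℕ} (L ω : Conn N) (q : ℕ) : Conn N :=
  if q = 1 then symC L else ω

/-- selector `ω_{(p)}` for `p ∈ {1,2,3}`. -/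
noncomputable def omSel3 {N : ℕ} (L ω ω3 : Conn N) (p : ℕ) : Conn N :=
  if p = 1 then symC L else if p = 2 then ω else ω3

/-- `T̂^i_{jk} := L^i_{[jk]} - τ^i_{jk}` -/
noncomputable def thatC {N : ℕ} (L τ : Conn N) : Conn N :=
  fun i j k x => torC L i j k x - τ i j k x

/-- `W̃_{(p)}^i_{jmn}` built from `L` and a symmetric family `ωp`. -/
noncomputable def weylTilde {N : ℕ} (L ωp : Conn N) (i j m n : Fin N) (x : Pt N) : ℝ :=
  curv L i j m n x - covD L ωp i j m n x + covD L ωp i j n m x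
    + ∑ α : Fin N, (ωp α j m x * ωp i α n x - ωp α j n x * ωp i α m x)
/-- The equitorsion Weyl-type invariant of Corollary 2.4. -/
noncomputable def bigWE {N : ℕ} (L ωp ωq1 ωq2 ωq3 ωr1 ωr2 ωr3 : Conn N)
    (u u' v v' w : ℝ) (i j m n : Fin N) (x : Pt N) : ℝ :=
  weylTilde L ωp i j m n x
  + u * (covD L (torC L) i j m n x
      - ∑ α : Fin N, ωq1 i α n x * torC L α j m x
      + ∑ α : Fin N, ωq2 α j n x * torC L i α m x
      + ∑ α : Fin N, ωq3 α m n x * torC L i j α x)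
  + u' * (covD L (torC L) i j n m x
      - ∑ α : Fin N, ωr1 i α m x * torC L α j n x
      + ∑ α : Fin N, ωr2 α j m x * torC L i α n x
      + ∑ α : Fin N, ωr3 α m n x * torC L i j α x)
  + v * ∑ α : Fin N, torC L α j m x * torC L i α n x
  + v' * ∑ α : Fin N, torC L α j n x * torC L i α m x
  + w * ∑ α : Fin N, torC L α m n x * torC L i α j x

section Helpers
variable {N : ℕ}

lemma pd_congr {l : Fin N} {f g : Pt N → ℝ} {x : Pt N}
    (h : f =ᶠ[nhds x] g) : pd l f x = pd l g x := by
  unfold pd; rw [Filter.EventuallyEq.fderiv_eq h]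

lemma pd_sub {l : Fin N} {f g : Pt N → ℝ} {x : Pt N}
    (hf : DifferentiableAt ℝ f x) (hg : DifferentiableAt ℝ g x) :
    pd l (fun y => f y - g y) x = pd l f x - pd l g x := by
  unfold pd
  rw [fderiv_fun_sub hf hg]
  rfl

lemma smooth_diff {U : Set (Pt N)} (hU : IsOpen U) {f : Pt N → ℝ}
    (hf : ContDiffOn ℝ (⊤ : ℕ∞) f U) {x : Pt N} (hx : x ∈ U) : DifferentiableAt ℝ f x :=
  ((hf.contDiffAt (hU.mem_nhds hx)).differentiableAt (by simp))

lemma weylTilde_eq (L ωp : Conn N) (i j m n : Fin N) (x : Pt N)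
    (hS : ∀ a b c : Fin N, DifferentiableAt ℝ (symC L a b c) x)
    (hω : ∀ a b c : Fin N, DifferentiableAt ℝ (ωp a b c) x) :
    weylTilde L ωp i j m n x
      = pd n (fun y => symC L i j m y - ωp i j m y) x
        - pd m (fun y => symC L i j n y - ωp i j n y) x
        + ∑ α : Fin N, ((symC L α j m x - ωp α j m x) * (symC L i α n x - ωp i α n x)
            - (symC L α j n x - ωp α j n x) * (symC L i α m x - ωp i α m x)) := by
  have h47 : ∑ α : Fin N, symC L α n m x * ωp i j α x
      = ∑ α : Fin N, symC L α m n x * ωp i j α x :=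
    Finset.sum_congr rfl fun α _ => by simp only [symC]; ring
  have hsum : ∑ α : Fin N, ((symC L α j m x - ωp α j m x) * (symC L i α n x - ωp i α n x)
            - (symC L α j n x - ωp α j n x) * (symC L i α m x - ωp i α m x))
      = (∑ α : Fin N, (symC L α j m x * symC L i α n x - symC L α j n x * symC L i α m x))
        - (∑ α : Fin N, symC L i α n x * ωp α j m x)
        + (∑ α : Fin N, symC L α j n x * ωp i α m x)
        + (∑ α : Fin N, symC L i α m x * ωp α j n x)
        - (∑ α : Fin N, symC L α j m x * ωp i α n x)
        + (∑ α : Fin N, (ωp α j m x * ωp i α n x - ωp α j n x * ωp i α m x)) := by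
    simp only [← Finset.sum_sub_distrib, ← Finset.sum_add_distrib]
    exact Finset.sum_congr rfl fun α _ => by ring
  rw [pd_sub (hS i j m) (hω i j m), pd_sub (hS i j n) (hω i j n), hsum]
  unfold weylTilde curv covD
  rw [h47]
  ring

end Helpers

/-- Corollary 2.4, the equitorsion case. -/
theorem weyl_type_equitorsion_invariants
    {N : ℕ} (hN : 2 ≤ N) (U : Set (Pt N)) (hU : IsOpen U)
    (L Lb ω ωb : Conn N)
    (hL : SmoothConn U L) (hLb : SmoothConn U Lb)
    (hω : SmoothConn U ω) (hωb : SmoothConn U ωb)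
    (hωsym : ∀ i j k x, ω i j k x = ω i k j x)
    (hωbsym : ∀ i j k x, ωb i j k x = ωb i k j x)
    (hequi : ∀ i j k, ∀ x ∈ U, torC Lb i j k x = torC L i j k x)
    (hP : ∀ i j k, ∀ x ∈ U,
      symC (fun a b c y => Lb a b c y - L a b c y) i j k x = ωb i j k x - ω i j k x)
    (u u' v v' w : ℝ) (p q₁ q₂ q₃ r₁ r₂ r₃ : ℕ)
    (hp : p ∈ ({1, 2, 3} : Set ℕ))
    (hq₁ : q₁ ∈ ({1, 2} : Set ℕ)) (hq₂ : q₂ ∈ ({1, 2} : Set ℕ))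
    (hq₃ : q₃ ∈ ({1, 2} : Set ℕ))
    (hr₁ : r₁ ∈ ({1, 2} : Set ℕ)) (hr₂ : r₂ ∈ ({1, 2} : Set ℕ))
    (hr₃ : r₃ ∈ ({1, 2} : Set ℕ)) :
    ∀ i j m n, ∀ x ∈ U,
      bigWE Lb
        (omSel3 Lb ωb
          (fun a b c y => (1/2) * symC (fun e f g z => Lb e f g z - L e f g z) a b c y) p)
        (omSel Lb ωb q₁) (omSel Lb ωb q₂) (omSel Lb ωb q₃)
        (omSel Lb ωb r₁) (omSel Lb ωb r₂) (omSel Lb ωb r₃)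
        u u' v v' w i j m n x
      = bigWE L
          (omSel3 L ω
            (fun a b c y => -((1/2) * symC (fun e f g z => Lb e f g z - L e f g z) a b c y)) p)
          (omSel L ω q₁) (omSel L ω q₂) (omSel L ω q₃)
          (omSel L ω r₁) (omSel L ω r₂) (omSel L ω r₃)
          u u' v v' w i j m n x := by
  intro i j m n x hx
  have hnx : U ∈ nhds x := hU.mem_nhds hx
  have hdL : ∀ a b c : Fin N, DifferentiableAt ℝ (L a b c) x :=
    fun a b c => smooth_diff hU (hL a b c) hx
  have hdLb : ∀ a b c : Fin N, DifferentiableAt ℝ (Lb a b c) x :=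
    fun a b c => smooth_diff hU (hLb a b c) hx
  have hdω : ∀ a b c : Fin N, DifferentiableAt ℝ (ω a b c) x :=
    fun a b c => smooth_diff hU (hω a b c) hx
  have hdωb : ∀ a b c : Fin N, DifferentiableAt ℝ (ωb a b c) x :=
    fun a b c => smooth_diff hU (hωb a b c) hx
  have hdS : ∀ a b c : Fin N, DifferentiableAt ℝ (symC L a b c) x := by
    intro a b c; unfold symC
    exact DifferentiableAt.const_mul ((hdL a b c).add (hdL a c b)) _
  have hdSb : ∀ a b c : Fin N, DifferentiableAt ℝ (symC Lb a b c) x := by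
    intro a b c; unfold symC
    exact DifferentiableAt.const_mul ((hdLb a b c).add (hdLb a c b)) _
  have hdC : ∀ a b c : Fin N,
      DifferentiableAt ℝ (symC (fun e f g z => Lb e f g z - L e f g z) a b c) x := by
    intro a b c; unfold symC
    exact DifferentiableAt.const_mul
      (((hdLb a b c).sub (hdL a b c)).add ((hdLb a c b).sub (hdL a c b))) _
  have hp' : p = 1 ∨ p = 2 ∨ p = 3 := by simpa using hp
  -- differentiability of the p-selectors
  have hdωp : ∀ a b c : Fin N, DifferentiableAt ℝ
      (omSel3 L ω
        (fun a b c y => -((1/2) * symC (fun e f g z => Lb e f g z - L e f g z) a b c y))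
        p a b c) x := by
    intro a b c
    rcases hp' with rfl | rfl | rfl
    · simpa [omSel3] using hdS a b c
    · simpa [omSel3] using hdω a b c
    · have h : DifferentiableAt ℝ
          (fun y => -((1/2 : ℝ) * symC (fun e f g z => Lb e f g z - L e f g z) a b c y)) x :=
        (DifferentiableAt.const_mul (hdC a b c) _).neg
      simpa [omSel3] using h
  have hdωpb : ∀ a b c : Fin N, DifferentiableAt ℝ
      (omSel3 Lb ωb
        (fun a b c y => (1/2) * symC (fun e f g z => Lb e f g z - L e f g z) a b c y)
        p a b c) x := by
    intro a b c
    rcases hp' with rfl | rfl | rfl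
    · simpa [omSel3] using hdSb a b c
    · simpa [omSel3] using hdωb a b c
    · have h : DifferentiableAt ℝ
          (fun y => (1/2 : ℝ) * symC (fun e f g z => Lb e f g z - L e f g z) a b c y) x :=
        DifferentiableAt.const_mul (hdC a b c) _
      simpa [omSel3] using h
  -- the deformation θ is the same for barred and unbarred data near x
  have hθ : ∀ a b c : Fin N,
      (fun y => symC Lb a b c y
          - omSel3 Lb ωb
              (fun a b c y => (1/2) * symC (fun e f g z => Lb e f g z - L e f g z) a b c y)
              p a b c y)
        =ᶠ[nhds x]
      (fun y => symC L a b c y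
          - omSel3 L ω
              (fun a b c y => -((1/2) * symC (fun e f g z => Lb e f g z - L e f g z) a b c y))
              p a b c y) := by
    intro a b c
    filter_upwards [hnx] with y hy
    rcases hp' with rfl | rfl | rfl
    · simp [omSel3]
    · have h := hP a b c y hy
      simp only [omSel3, symC] at h ⊢
      norm_num at h ⊢
      linarith
    · simp only [omSel3, symC]
      norm_num
      ring
  -- invariance of the Weyl-tilde part
  have hW : weylTilde Lb
        (omSel3 Lb ωb
          (fun a b c y => (1/2) * symC (fun e f g z => Lb e f g z - L e f g z) a b c y) p)
        i j m n x
      = weylTilde L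
          (omSel3 L ω
            (fun a b c y => -((1/2) * symC (fun e f g z => Lb e f g z - L e f g z) a b c y)) p)
          i j m n x := by
    rw [weylTilde_eq Lb _ i j m n x hdSb hdωpb, weylTilde_eq L _ i j m n x hdS hdωp,
        pd_congr (hθ i j m), pd_congr (hθ i j n)]
    have hpt : ∀ a b c : Fin N,
        symC Lb a b c x
            - omSel3 Lb ωb
                (fun a b c y => (1/2) * symC (fun e f g z => Lb e f g z - L e f g z) a b c y)
                p a b c x
          = symC L a b c x
            - omSel3 L ω
                (fun a b c y => -((1/2) * symC (fun e f g z => Lb e f g z - L e f g z) a b c y))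
                p a b c x := by
      intro a b c
      simpa using (hθ a b c).eq_of_nhds
    simp only [hpt]
  -- pointwise facts about torsion and symmetric parts
  have hT : ∀ a b c : Fin N, torC Lb a b c x = torC L a b c x := fun a b c => hequi a b c x hx
  have hpdT : ∀ a b c l : Fin N, pd l (torC Lb a b c) x = pd l (torC L a b c) x := by
    intro a b c l
    exact pd_congr (Filter.eventuallyEq_of_mem hnx fun y hy => hequi a b c y hy)
  have hSbx : ∀ a b c : Fin N, symC Lb a b c x
      = symC L a b c x + symC (fun e f g z => Lb e f g z - L e f g z) a b c x := by
    intro a b c; simp only [symC]; ring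
  have hsel : ∀ q : ℕ, q ∈ ({1, 2} : Set ℕ) → ∀ a b c : Fin N,
      omSel Lb ωb q a b c x
        = omSel L ω q a b c x + symC (fun e f g z => Lb e f g z - L e f g z) a b c x := by
    intro q hq a b c
    have hq' : q = 1 ∨ q = 2 := by simpa using hq
    rcases hq' with rfl | rfl
    · simpa [omSel] using hSbx a b c
    · have h := hP a b c x hx
      simp only [omSel]
      norm_num
      linarith
  have hs1 := hsel q₁ hq₁
  have hs2 := hsel q₂ hq₂
  have hs3 := hsel q₃ hq₃
  have hs4 := hsel r₁ hr₁
  have hs5 := hsel r₂ hr₂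
  have hs6 := hsel r₃ hr₃
  have hCsym : ∀ a b c : Fin N,
      symC (fun e f g z => Lb e f g z - L e f g z) a b c x
        = symC (fun e f g z => Lb e f g z - L e f g z) a c b x := by
    intro a b c; simp only [symC]; ring
  unfold bigWE
  rw [hW]
  set W2 := weylTilde L
      (omSel3 L ω
        (fun a b c y => -((1/2) * symC (fun e f g z => Lb e f g z - L e f g z) a b c y)) p)
      i j m n x with hW2
  unfold covD
  simp only [hpdT, hT, hSbx, hs1, hs2, hs3, hs4, hs5, hs6]
  have hCnm : ∀ α : Fin N,
      symC (fun e f g z => Lb e f g z - L e f g z) α n m x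
        = symC (fun e f g z => Lb e f g z - L e f g z) α m n x :=
    fun α => hCsym α n m
  simp only [hCnm]
  simp only [add_mul, Finset.sum_add_distrib]
  ring
end

section
/- Let g and ḡ be smooth fields of symmetric invertible N×N matrices on U (Riemannian-type metrics), with Christoffel symbols Γ^i_{jk} := (1/2) Σ_α g^{iα} (∂_k g_{jα} − ∂_α g_{jk} + ∂_j g_{αk}) and Γ̄ defined analogously from ḡ, where (g^{iα}) is the pointwise inverse matrix of (g_{iα}). Suppose there is a smooth family ψ_j : U → ℝ with Γ̄^i_{jk} − Γ^i_{jk} = ψ_j δ^i_k + ψ_k δ^i_j on U (an equitorsion geodesic mapping at the level of the associated spaces). Set θ_j := Σ_α Γ^α_{jα} and θ_{j|n} := ∂_n θ_j − Σ_α Γ^α_{jn} θ_α, and let R^i_{jmn} be the curvature tensor of Γ. Then the geometrical object W^i_{jmn} := R^i_{jmn} − (1/(N+1)²) δ^i_m ((N+1) θ_{j|n} + θ_j θ_n) + (1/(N+1)²) δ^i_n ((N+1) θ_{j|m} + θ_j θ_m) is an invariant of the mapping: the object defined by the same formula from ḡ, Γ̄, θ̄ and the barred covariant derivative coincides with W^i_{jmn}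 on U (the basic associated invariant of the Weyl type of an equitorsion geodesic mapping, equation (3.5)). -/
open scoped BigOperators

/-- covariant derivative `P^i_{jk|l}` with respect to a symmetric connection family `Γ`. -/
noncomputable def covDS {N : ℕ} (Γ A : Conn N) (i j k l : Fin N) (x : Pt N) : ℝ :=
  pd l (A i j k) x + ∑ α : Fin N, Γ i α l x * A α j k x
    - ∑ α : Fin N, Γ α j l x * A i α k x
    - ∑ α : Fin N, Γ α k l x * A i j α x

/-- curvature tensor of a symmetric connection family `Γ`. -/
noncomputable def curvS {N : ℕ} (Γ : Conn N) (i j m n : Fin N) (x : Pt N) : ℝ :=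
  pd n (Γ i j m) x - pd m (Γ i j n) x
    + ∑ α : Fin N, (Γ α j m x * Γ i α n x - Γ α j n x * Γ i α m x)
/-- Christoffel symbols of the second kind of a (Riemannian-type) metric `g`. -/
noncomputable def christoffel {N : ℕ} (g : Pt N → Matrix (Fin N) (Fin N) ℝ) : Conn N :=
  fun i j k x => (1/2) * ∑ α : Fin N, (g x)⁻¹ i α *
    (pd k (fun y => g y j α) x - pd α (fun y => g y j k) x + pd j (fun y => g y α k) x)

/-- `θ_j := Σ_α Γ^α_{jα}` -/
noncomputable def theta {N : ℕ} (g : Pt N → Matrix (Fin N) (Fin N) ℝ) (j : Fin N)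
    (x : Pt N) : ℝ :=
  ∑ α : Fin N, christoffel g α j α x

/-- `θ_{j|n} := ∂_n θ_j − Σ_α Γ^α_{jn} θ_α` -/
noncomputable def thetaD {N : ℕ} (g : Pt N → Matrix (Fin N) (Fin N) ℝ) (j n : Fin N)
    (x : Pt N) : ℝ :=
  pd n (theta g j) x - ∑ α : Fin N, christoffel g α j n x * theta g α x

/-- The basic associated invariant of the Weyl type of an equitorsion geodesic mapping,
equation (3.5). -/
noncomputable def weylGeo {N : ℕ} (g : Pt N → Matrix (Fin N) (Fin N) ℝ)
    (i j m n : Fin N) (x : Pt N) : ℝ :=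
  curvS (christoffel g) i j m n x
    - (1/(((N:ℝ)+1)^2)) * kron i m *
        (((N:ℝ)+1) * thetaD g j n x + theta g j x * theta g n x)
    + (1/(((N:ℝ)+1)^2)) * kron i n *
        (((N:ℝ)+1) * thetaD g j m x + theta g j x * theta g m x)


namespace WeylAux

variable {N : ℕ} {U : Set (Pt N)} {x : Pt N}

lemma diffAt (hU : IsOpen U) {f : Pt N → ℝ} (hf : ContDiffOn ℝ (⊤ : ℕ∞) f U) (hx : x ∈ U) :
    DifferentiableAt ℝ f x :=
  (hf.contDiffAt (hU.mem_nhds hx)).differentiableAt (by simp)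

lemma pd_congr (hU : IsOpen U) {f h : Pt N → ℝ} (hx : x ∈ U)
    (hfh : ∀ y ∈ U, f y = h y) (l : Fin N) : pd l f x = pd l h x := by
  unfold pd
  rw [Filter.EventuallyEq.fderiv_eq (Filter.eventuallyEq_of_mem (hU.mem_nhds hx) hfh)]

lemma pd_add {f h : Pt N → ℝ} (hf : DifferentiableAt ℝ f x) (hh : DifferentiableAt ℝ h x)
    (l : Fin N) : pd l (fun y => f y + h y) x = pd l f x + pd l h x := by
  unfold pd; rw [fderiv_fun_add hf hh]; rfl

lemma pd_sub {f h : Pt N → ℝ} (hf : DifferentiableAt ℝ f x) (hh : DifferentiableAt ℝ h x)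
    (l : Fin N) : pd l (fun y => f y - h y) x = pd l f x - pd l h x := by
  unfold pd; rw [fderiv_fun_sub hf hh]; rfl

lemma pd_mul {f h : Pt N → ℝ} (hf : DifferentiableAt ℝ f x) (hh : DifferentiableAt ℝ h x)
    (l : Fin N) : pd l (fun y => f y * h y) x = pd l f x * h x + f x * pd l h x := by
  unfold pd; rw [fderiv_fun_mul hf hh]
  simp only [ContinuousLinearMap.add_apply, ContinuousLinearMap.coe_smul', Pi.smul_apply, smul_eq_mul]
  ring

lemma pd_const (c : ℝ) (l : Fin N) : pd l (fun _ => c) x = 0 := by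
  unfold pd; rw [fderiv_fun_const]; rfl

lemma pd_const_mul {f : Pt N → ℝ} (hf : DifferentiableAt ℝ f x) (c : ℝ) (l : Fin N) :
    pd l (fun y => c * f y) x = c * pd l f x := by
  unfold pd; rw [fderiv_const_mul hf]; rfl

lemma pd_sum {ι : Type*} (s : Finset ι) {f : ι → Pt N → ℝ}
    (hf : ∀ i ∈ s, DifferentiableAt ℝ (f i) x) (l : Fin N) :
    pd l (fun y => ∑ i ∈ s, f i y) x = ∑ i ∈ s, pd l (f i) x := by
  unfold pd; rw [fderiv_fun_sum hf]; simp

lemma contDiffOn_pd (hU : IsOpen U) {f : Pt N → ℝ} (hf : ContDiffOn ℝ (⊤ : ℕ∞) f U) (l : Fin N) :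
    ContDiffOn ℝ (⊤ : ℕ∞) (fun y => pd l f y) U :=
  (hf.fderiv_of_isOpen hU (by simp)).clm_apply contDiffOn_const

lemma pd_pd_symm (hU : IsOpen U) {f : Pt N → ℝ} (hf : ContDiffOn ℝ (⊤ : ℕ∞) f U) (hx : x ∈ U)
    (m n : Fin N) : pd n (fun y => pd m f y) x = pd m (fun y => pd n f y) x := by
  have hct : ContDiffAt ℝ (⊤ : ℕ∞) f x := hf.contDiffAt (hU.mem_nhds hx)
  have hsym := hct.isSymmSndFDerivAt (by rw [minSmoothness_of_isRCLikeNormedField]; exact WithTop.coe_le_coe.2 le_top)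
  have hd : DifferentiableAt ℝ (fderiv ℝ f) x :=
    (hct.fderiv_right (m := 1) ((WithTop.coe_le_coe.2 le_top))).differentiableAt one_ne_zero
  have key : ∀ a b : Fin N, pd a (fun y => pd b f y) x
      = fderiv ℝ (fderiv ℝ f) x (EuclideanSpace.single a 1) (EuclideanSpace.single b 1) := by
    intro a b
    unfold pd
    rw [fderiv_clm_apply hd (differentiableAt_const _)]
    simp
  rw [key, key, hsym]

end WeylAux

namespace WeylAux

variable {N : ℕ} {U : Set (Pt N)} {x : Pt N}

lemma contDiffOn_det {M : Pt N → Matrix (Fin N) (Fin N) ℝ}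
    (hM : ∀ i j, ContDiffOn ℝ (⊤ : ℕ∞) (fun x => M x i j) U) :
    ContDiffOn ℝ (⊤ : ℕ∞) (fun x => (M x).det) U := by
  have h : (fun x => (M x).det)
      = fun x => ∑ σ : Equiv.Perm (Fin N),
          ((Equiv.Perm.sign σ : ℤ) : ℝ) * ∏ i, M x (σ i) i := by
    funext x; rw [Matrix.det_apply']
  rw [h]
  exact ContDiffOn.sum fun σ _ =>
    contDiffOn_const.mul (contDiffOn_prod fun i _ => hM (σ i) i)

lemma contDiffOn_inv_entry {g : Pt N → Matrix (Fin N) (Fin N) ℝ}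
    (hg : ∀ i j, ContDiffOn ℝ (⊤ : ℕ∞) (fun x => g x i j) U)
    (hinv : ∀ x ∈ U, IsUnit (g x)) (i j : Fin N) :
    ContDiffOn ℝ (⊤ : ℕ∞) (fun x => (g x)⁻¹ i j) U := by
  have hdet : ContDiffOn ℝ (⊤ : ℕ∞) (fun x => (g x).det) U := contDiffOn_det hg
  have hform : ∀ y, (g y)⁻¹ i j = ((g y).det)⁻¹ * (g y).adjugate i j := by
    intro y
    rw [Matrix.inv_def, Ring.inverse_eq_inv']
    simp [Matrix.smul_apply]
  simp only [hform]
  apply ContDiffOn.mul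
  · exact hdet.inv fun y hy => by
      have := (Matrix.isUnit_iff_isUnit_det (g y)).1 (hinv y hy)
      exact this.ne_zero
  · have : (fun y => (g y).adjugate i j)
        = fun y => ((g y).updateRow j (Pi.single i 1)).det := by
      funext y; rw [Matrix.adjugate_apply]
    rw [this]
    apply contDiffOn_det
    intro k l
    simp only [Matrix.updateRow_apply]
    by_cases hk : k = j
    · simp only [hk, if_true]
      exact contDiffOn_const
    · simp only [hk, if_false]
      exact hg k l

lemma inv_symm {g : Pt N → Matrix (Fin N) (Fin N) ℝ}
    (hgsym : ∀ y ∈ U, ∀ i j, g y i j = g y j i) (hy : x ∈ U) (i j : Fin N) :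
    (g x)⁻¹ i j = (g x)⁻¹ j i := by
  have ht : (g x).transpose = g x := by
    ext a b; exact hgsym x hy b a
  have := Matrix.transpose_nonsing_inv (g x)
  rw [ht] at this
  calc (g x)⁻¹ i j = ((g x)⁻¹).transpose j i := rfl
  _ = (g x)⁻¹ j i := by rw [this]

end WeylAux

namespace WeylAux

variable {N : ℕ} {U : Set (Pt N)} {x : Pt N}

lemma sum4_swap (f : Fin N → Fin N → Fin N → Fin N → ℝ) :
    ∑ α, ∑ γ, ∑ δ, ∑ β, f α γ δ β = ∑ δ, ∑ β, ∑ α, ∑ γ, f α γ δ β := by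
  have h1 : ∑ p : Fin N × Fin N, ∑ q : Fin N × Fin N, f p.1 p.2 q.1 q.2
      = ∑ q : Fin N × Fin N, ∑ p : Fin N × Fin N, f p.1 p.2 q.1 q.2 := Finset.sum_comm
  have h2 : ∑ p : Fin N × Fin N, ∑ q : Fin N × Fin N, f p.1 p.2 q.1 q.2
      = ∑ α, ∑ γ, ∑ δ, ∑ β, f α γ δ β := by
    rw [Fintype.sum_prod_type]
    exact Finset.sum_congr rfl fun α _ => Finset.sum_congr rfl fun γ _ => by
      rw [Fintype.sum_prod_type]
  have h3 : ∑ q : Fin N × Fin N, ∑ p : Fin N × Fin N, f p.1 p.2 q.1 q.2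
      = ∑ δ, ∑ β, ∑ α, ∑ γ, f α γ δ β := by
    rw [Fintype.sum_prod_type]
    exact Finset.sum_congr rfl fun δ _ => Finset.sum_congr rfl fun β _ => by
      rw [Fintype.sum_prod_type]
  rw [← h2, h1, h3]

section Metric

variable {g : Pt N → Matrix (Fin N) (Fin N) ℝ}

lemma christoffel_contDiffOn (hU : IsOpen U)
    (hg : ∀ i j, ContDiffOn ℝ (⊤ : ℕ∞) (fun x => g x i j) U)
    (hinv : ∀ x ∈ U, IsUnit (g x)) (i j k : Fin N) :
    ContDiffOn ℝ (⊤ : ℕ∞) (christoffel g i j k) U := by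
  unfold christoffel
  apply ContDiffOn.mul contDiffOn_const
  apply ContDiffOn.sum
  intro α _
  exact (contDiffOn_inv_entry hg hinv i α).mul
    (((contDiffOn_pd hU (hg j α) k).sub (contDiffOn_pd hU (hg j k) α)).add
      (contDiffOn_pd hU (hg α k) j))

lemma theta_contDiffOn (hU : IsOpen U)
    (hg : ∀ i j, ContDiffOn ℝ (⊤ : ℕ∞) (fun x => g x i j) U)
    (hinv : ∀ x ∈ U, IsUnit (g x)) (j : Fin N) :
    ContDiffOn ℝ (⊤ : ℕ∞) (theta g j) U := by
  unfold theta
  exact ContDiffOn.sum fun α _ => christoffel_contDiffOn hU hg hinv α j α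

lemma christoffel_symm (hU : IsOpen U)
    (hgsym : ∀ y ∈ U, ∀ i j, g y i j = g y j i) (hx : x ∈ U) (i j k : Fin N) :
    christoffel g i j k x = christoffel g i k j x := by
  unfold christoffel
  congr 1
  apply Finset.sum_congr rfl
  intro α _
  have e1 : pd k (fun y => g y j α) x = pd k (fun y => g y α j) x :=
    pd_congr hU hx (fun y hy => hgsym y hy j α) k
  have e2 : pd α (fun y => g y j k) x = pd α (fun y => g y k j) x :=
    pd_congr hU hx (fun y hy => hgsym y hy j k) α
  have e3 : pd j (fun y => g y α k) x = pd j (fun y => g y k α) x :=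
    pd_congr hU hx (fun y hy => hgsym y hy α k) j
  rw [e1, e2, e3]
  ring

lemma pd_inv_entry (hU : IsOpen U)
    (hg : ∀ i j, ContDiffOn ℝ (⊤ : ℕ∞) (fun x => g x i j) U)
    (hinv : ∀ x ∈ U, IsUnit (g x)) (hx : x ∈ U) (l α β : Fin N) :
    pd l (fun y => (g y)⁻¹ α β) x
      = - ∑ γ, ∑ δ, (g x)⁻¹ α γ * pd l (fun y => g y γ δ) x * (g x)⁻¹ δ β := by
  have hBd : ∀ a b, DifferentiableAt ℝ (fun y => (g y)⁻¹ a b) x :=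
    fun a b => diffAt hU (contDiffOn_inv_entry hg hinv a b) hx
  have hgd : ∀ a b, DifferentiableAt ℝ (fun y => g y a b) x :=
    fun a b => diffAt hU (hg a b) hx
  set P : Fin N → ℝ := fun γ => pd l (fun y => (g y)⁻¹ α γ) x with hP
  set dg : Fin N → Fin N → ℝ := fun γ δ => pd l (fun y => g y γ δ) x with hdg
  have hzero : ∀ β', ∑ γ, (P γ * g x γ β' + (g x)⁻¹ α γ * dg γ β') = 0 := by
    intro β'
    have hconst : ∀ y ∈ U, (∑ γ, (g y)⁻¹ α γ * g y γ β') = (if α = β' then (1:ℝ) else 0) := by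
      intro y hy
      calc ∑ γ, (g y)⁻¹ α γ * g y γ β' = ((g y)⁻¹ * g y) α β' := (Matrix.mul_apply).symm
        _ = (1 : Matrix (Fin N) (Fin N) ℝ) α β' := by
            rw [Matrix.nonsing_inv_mul (g y) ((Matrix.isUnit_iff_isUnit_det _).1 (hinv y hy))]
        _ = if α = β' then (1:ℝ) else 0 := Matrix.one_apply
    have h1 : pd l (fun y => ∑ γ, (g y)⁻¹ α γ * g y γ β') x = 0 := by
      rw [pd_congr hU hx hconst l, pd_const]
    rw [← h1, pd_sum Finset.univ (fun γ _ => (hBd α γ).fun_mul (hgd γ β')) l]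
    exact (Finset.sum_congr rfl fun γ _ => (pd_mul (hBd α γ) (hgd γ β') l).symm)
  have hright : ∀ γ, ∑ β', g x γ β' * (g x)⁻¹ β' β = if γ = β then (1:ℝ) else 0 := by
    intro γ
    calc ∑ β', g x γ β' * (g x)⁻¹ β' β = (g x * (g x)⁻¹) γ β := (Matrix.mul_apply).symm
      _ = (1 : Matrix (Fin N) (Fin N) ℝ) γ β := by
          rw [Matrix.mul_nonsing_inv (g x) ((Matrix.isUnit_iff_isUnit_det _).1 (hinv x hx))]
      _ = _ := Matrix.one_apply
  have hleft : ∀ β', ∑ γ, P γ * g x γ β' = - ∑ γ, (g x)⁻¹ α γ * dg γ β' := by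
    intro β'
    have := hzero β'
    rw [Finset.sum_add_distrib] at this
    linarith
  calc P β = ∑ γ, P γ * (if γ = β then (1:ℝ) else 0) := by
        rw [Finset.sum_congr rfl (fun γ _ => by rw [mul_ite, mul_one, mul_zero])]
        rw [Finset.sum_ite_eq' Finset.univ β P]
        simp
    _ = ∑ γ, P γ * ∑ β', g x γ β' * (g x)⁻¹ β' β :=
        Finset.sum_congr rfl fun γ _ => by rw [hright γ]
    _ = ∑ γ, ∑ β', P γ * g x γ β' * (g x)⁻¹ β' β := by
        refine Finset.sum_congr rfl fun γ _ => ?_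
        rw [Finset.mul_sum]
        exact Finset.sum_congr rfl fun β' _ => by ring
    _ = ∑ β', ∑ γ, P γ * g x γ β' * (g x)⁻¹ β' β := Finset.sum_comm
    _ = ∑ β', (∑ γ, P γ * g x γ β') * (g x)⁻¹ β' β :=
        Finset.sum_congr rfl fun β' _ => by rw [Finset.sum_mul]
    _ = ∑ β', (- ∑ γ, (g x)⁻¹ α γ * dg γ β') * (g x)⁻¹ β' β :=
        Finset.sum_congr rfl fun β' _ => by rw [hleft β']
    _ = ∑ β', ∑ γ, -((g x)⁻¹ α γ * dg γ β' * (g x)⁻¹ β' β) := by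
        refine Finset.sum_congr rfl fun β' _ => ?_
        rw [neg_mul, Finset.sum_mul, ← Finset.sum_neg_distrib]
        try exact Finset.sum_congr rfl fun γ _ => by ring
    _ = ∑ γ, ∑ β', -((g x)⁻¹ α γ * dg γ β' * (g x)⁻¹ β' β) := Finset.sum_comm
    _ = - ∑ γ, ∑ δ, (g x)⁻¹ α γ * dg γ δ * (g x)⁻¹ δ β := by
        rw [← Finset.sum_neg_distrib]
        exact Finset.sum_congr rfl fun γ _ => by rw [← Finset.sum_neg_distrib]

end Metric

end WeylAux

namespace WeylAux

variable {N : ℕ} {U : Set (Pt N)} {x : Pt N}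

lemma sum4_reorder (f : Fin N → Fin N → Fin N → Fin N → ℝ) :
    ∑ a, ∑ b, ∑ c, ∑ d, f a b c d = ∑ a, ∑ c, ∑ d, ∑ b, f a b c d := by
  refine Finset.sum_congr rfl fun a _ => ?_
  rw [Finset.sum_comm]
  exact Finset.sum_congr rfl fun c _ => Finset.sum_comm

section Metric2

variable {g : Pt N → Matrix (Fin N) (Fin N) ℝ}

lemma theta_repr (hU : IsOpen U)
    (hgsym : ∀ y ∈ U, ∀ i j, g y i j = g y j i)
    (hinv : ∀ y ∈ U, IsUnit (g y)) (m : Fin N) :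
    ∀ y ∈ U, theta g m y
      = (1/2) * ∑ α, ∑ β, (g y)⁻¹ α β * pd m (fun z => g z β α) y := by
  intro y hy
  have hbsym : ∀ a b : Fin N, (g y)⁻¹ a b = (g y)⁻¹ b a :=
    fun a b => inv_symm hgsym hy a b
  have hAB : ∑ α, ∑ β, (g y)⁻¹ α β * pd β (fun z => g z m α) y
      = ∑ α, ∑ β, (g y)⁻¹ α β * pd α (fun z => g z m β) y := by
    rw [Finset.sum_comm]
    exact Finset.sum_congr rfl fun β _ => Finset.sum_congr rfl fun α _ => by
      rw [hbsym β α]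
  calc theta g m y
      = (1/2) * ∑ α, ∑ β, (g y)⁻¹ α β *
        (pd α (fun z => g z m β) y - pd β (fun z => g z m α) y
          + pd m (fun z => g z β α) y) := by
        unfold theta christoffel
        rw [← Finset.mul_sum]
    _ = (1/2) * ∑ α, ∑ β, (g y)⁻¹ α β * pd m (fun z => g z β α) y := by
        congr 1
        have e1 : (∑ α, ∑ β, (g y)⁻¹ α β *
            (pd α (fun z => g z m β) y - pd β (fun z => g z m α) y
              + pd m (fun z => g z β α) y))
          = (∑ α, ∑ β, (g y)⁻¹ α β * pd α (fun z => g z m β) y)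
            - (∑ α, ∑ β, (g y)⁻¹ α β * pd β (fun z => g z m α) y)
            + ∑ α, ∑ β, (g y)⁻¹ α β * pd m (fun z => g z β α) y := by
          simp only [mul_sub, mul_add, Finset.sum_add_distrib, Finset.sum_sub_distrib]
        rw [e1, hAB]
        ring

lemma theta_curl (hU : IsOpen U)
    (hg : ∀ i j, ContDiffOn ℝ (⊤ : ℕ∞) (fun x => g x i j) U)
    (hgsym : ∀ y ∈ U, ∀ i j, g y i j = g y j i)
    (hinv : ∀ y ∈ U, IsUnit (g y)) (hx : x ∈ U) (m n : Fin N) :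
    pd n (theta g m) x = pd m (theta g n) x := by
  have hBd : ∀ a b : Fin N, DifferentiableAt ℝ (fun y => (g y)⁻¹ a b) x :=
    fun a b => diffAt hU (contDiffOn_inv_entry hg hinv a b) hx
  have hpdG : ∀ (m' a b : Fin N), ContDiffOn ℝ (⊤ : ℕ∞) (fun y => pd m' (fun z => g z a b) y) U :=
    fun m' a b => contDiffOn_pd hU (hg a b) m'
  have hpdGd : ∀ (m' a b : Fin N), DifferentiableAt ℝ (fun y => pd m' (fun z => g z a b) y) x :=
    fun m' a b => diffAt hU (hpdG m' a b) hx
  have hbsym : ∀ a b : Fin N, (g x)⁻¹ a b = (g x)⁻¹ b a :=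
    fun a b => inv_symm hgsym hx a b
  have hexp : ∀ m' n' : Fin N, pd n' (theta g m') x
      = (1/2) * ((∑ α, ∑ β, pd n' (fun y => (g y)⁻¹ α β) x * pd m' (fun z => g z β α) x)
        + ∑ α, ∑ β, (g x)⁻¹ α β * pd n' (fun y => pd m' (fun z => g z β α) y) x) := by
    intro m' n'
    have hdd : ∀ α : Fin N, DifferentiableAt ℝ
        (fun y => ∑ β, (g y)⁻¹ α β * pd m' (fun z => g z β α) y) x :=
      fun α => DifferentiableAt.fun_sum fun β _ => (hBd α β).fun_mul (hpdGd m' β α)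
    rw [pd_congr hU hx (theta_repr hU hgsym hinv m') n',
      pd_const_mul (DifferentiableAt.fun_sum fun α _ => hdd α) (1/2) n',
      pd_sum Finset.univ (fun α _ => hdd α) n']
    congr 1
    rw [← Finset.sum_add_distrib]
    refine Finset.sum_congr rfl fun α _ => ?_
    rw [pd_sum Finset.univ (fun β _ => (hBd α β).fun_mul (hpdGd m' β α)) n',
      ← Finset.sum_add_distrib]
    exact Finset.sum_congr rfl fun β _ => pd_mul (hBd α β) (hpdGd m' β α) n'
  rw [hexp m n, hexp n m]
  congr 1
  have hU2 : (∑ α, ∑ β, (g x)⁻¹ α β * pd n (fun y => pd m (fun z => g z β α) y) x)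
      = ∑ α, ∑ β, (g x)⁻¹ α β * pd m (fun y => pd n (fun z => g z β α) y) x :=
    Finset.sum_congr rfl fun α _ => Finset.sum_congr rfl fun β _ => by
      rw [pd_pd_symm hU (hg β α) hx m n]
  have hT : ∀ m' n' : Fin N,
      (∑ α, ∑ β, pd n' (fun y => (g y)⁻¹ α β) x * pd m' (fun z => g z β α) x)
        = - ∑ α, ∑ γ, ∑ δ, ∑ β, (g x)⁻¹ α γ * pd n' (fun z => g z γ δ) x
            * (g x)⁻¹ δ β * pd m' (fun z => g z β α) x := by
    intro m' n'
    calc (∑ α, ∑ β, pd n' (fun y => (g y)⁻¹ α β) x * pd m' (fun z => g z β α) x)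
        = ∑ α, ∑ β, -(∑ γ, ∑ δ, (g x)⁻¹ α γ * pd n' (fun z => g z γ δ) x * (g x)⁻¹ δ β
            * pd m' (fun z => g z β α) x) := by
          refine Finset.sum_congr rfl fun α _ => Finset.sum_congr rfl fun β _ => ?_
          rw [pd_inv_entry hU hg hinv hx n' α β, neg_mul, Finset.sum_mul]
          rw [neg_inj]
          exact Finset.sum_congr rfl fun γ _ => by rw [Finset.sum_mul]
      _ = - ∑ α, ∑ β, ∑ γ, ∑ δ, (g x)⁻¹ α γ * pd n' (fun z => g z γ δ) x * (g x)⁻¹ δ β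
            * pd m' (fun z => g z β α) x := by
          rw [← Finset.sum_neg_distrib]
          exact Finset.sum_congr rfl fun α _ => by rw [← Finset.sum_neg_distrib]
      _ = _ := by rw [sum4_reorder]
  rw [hT m n, hT n m, hU2]
  congr 1
  rw [neg_inj]
  rw [sum4_swap (fun α γ δ β => (g x)⁻¹ α γ * pd n (fun z => g z γ δ) x * (g x)⁻¹ δ β
    * pd m (fun z => g z β α) x)]
  refine Finset.sum_congr rfl fun α _ => Finset.sum_congr rfl fun γ _ =>
    Finset.sum_congr rfl fun δ _ => Finset.sum_congr rfl fun β _ => ?_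
  ring

end Metric2

end WeylAux

namespace WeylAux

variable {N : ℕ} {U : Set (Pt N)} {x : Pt N}

lemma pd_mul_const {f : Pt N → ℝ} (hf : DifferentiableAt ℝ f x) (c : ℝ) (l : Fin N) :
    pd l (fun y => f y * c) x = pd l f x * c := by
  have : (fun y => f y * c) = fun y => c * f y := by funext y; ring
  rw [this, pd_const_mul hf c l]; ring

lemma sum_kron_snd (f : Fin N → ℝ) (n : Fin N) : ∑ α, kron α n * f α = f n := by
  simp [kron, ite_mul, one_mul, zero_mul, Finset.sum_ite_eq']

lemma sum_kron_fst (f : Fin N → ℝ) (i : Fin N) : ∑ α, kron i α * f α = f i := by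
  simp [kron, ite_mul, one_mul, zero_mul, Finset.sum_ite_eq]

end WeylAux

/-- equation (3.5) is an invariant of an equitorsion geodesic mapping. -/
theorem weyl_type_equitorsion_geodesic
    {N : ℕ} (hN : 2 ≤ N) (U : Set (Pt N)) (hU : IsOpen U)
    (g gb : Pt N → Matrix (Fin N) (Fin N) ℝ)
    (hg : ∀ i j, ContDiffOn ℝ (⊤ : ℕ∞) (fun x => g x i j) U)
    (hgb : ∀ i j, ContDiffOn ℝ (⊤ : ℕ∞) (fun x => gb x i j) U)
    (hgsym : ∀ x ∈ U, ∀ i j, g x i j = g x j i)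
    (hgbsym : ∀ x ∈ U, ∀ i j, gb x i j = gb x j i)
    (hginv : ∀ x ∈ U, IsUnit (g x))
    (hgbinv : ∀ x ∈ U, IsUnit (gb x))
    (ψ : Fin N → Pt N → ℝ) (hψ : ∀ j, ContDiffOn ℝ (⊤ : ℕ∞) (ψ j) U)
    (hgeo : ∀ i j k, ∀ x ∈ U,
      christoffel gb i j k x - christoffel g i j k x
        = ψ j x * kron i k + ψ k x * kron i j) :
    ∀ i j m n, ∀ x ∈ U, weylGeo gb i j m n x = weylGeo g i j m n x := by
  intro i j m n x hx
  have hNe : ((N:ℝ)+1) ≠ 0 := by positivity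
  have hGg : ∀ a b c, ContDiffOn ℝ (⊤ : ℕ∞) (christoffel g a b c) U :=
    fun a b c => WeylAux.christoffel_contDiffOn hU hg hginv a b c
  have hGgd : ∀ a b c, DifferentiableAt ℝ (christoffel g a b c) x :=
    fun a b c => WeylAux.diffAt hU (hGg a b c) hx
  have hψd : ∀ a, DifferentiableAt ℝ (ψ a) x := fun a => WeylAux.diffAt hU (hψ a) hx
  have hθgd : ∀ a, DifferentiableAt ℝ (theta g a) x :=
    fun a => WeylAux.diffAt hU (WeylAux.theta_contDiffOn hU hg hginv a) hx
  have hθgbd : ∀ a, DifferentiableAt ℝ (theta gb a) x :=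
    fun a => WeylAux.diffAt hU (WeylAux.theta_contDiffOn hU hgb hgbinv a) hx
  have hPv : ∀ a b c, ∀ y ∈ U, christoffel gb a b c y
      = christoffel g a b c y + ψ b y * kron a c + ψ c y * kron a b := by
    intro a b c y hy
    have h := hgeo a b c y hy
    linarith
  have hPx : ∀ a b c, christoffel gb a b c x
      = christoffel g a b c x + ψ b x * kron a c + ψ c x * kron a b :=
    fun a b c => hPv a b c x hx
  have hθv : ∀ a, ∀ y ∈ U, theta gb a y = theta g a y + ((N:ℝ)+1) * ψ a y := by
    intro a y hy
    unfold theta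
    rw [Finset.sum_congr rfl (fun α _ => hPv α a α y hy)]
    simp only [Finset.sum_add_distrib, kron, if_pos rfl, mul_one, mul_ite, mul_zero,
      Finset.sum_ite_eq', Finset.mem_univ, if_true, Finset.sum_const, Finset.card_univ,
      Fintype.card_fin, nsmul_eq_mul]
    ring
  have hθx : ∀ a, theta gb a x = theta g a x + ((N:ℝ)+1) * ψ a x := fun a => hθv a x hx
  have hpdθ : ∀ a l, pd l (theta gb a) x
      = pd l (theta g a) x + ((N:ℝ)+1) * pd l (ψ a) x := by
    intro a l
    rw [WeylAux.pd_congr hU hx (hθv a) l,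
      WeylAux.pd_add (hθgd a) ((hψd a).const_mul _) l,
      WeylAux.pd_const_mul (hψd a) _ l]
  have hpdΓ : ∀ a b c l, pd l (christoffel gb a b c) x
      = pd l (christoffel g a b c) x + kron a c * pd l (ψ b) x
        + kron a b * pd l (ψ c) x := by
    intro a b c l
    rw [WeylAux.pd_congr hU hx (hPv a b c) l,
      WeylAux.pd_add ((hGgd a b c).fun_add ((hψd b).mul_const _)) ((hψd c).mul_const _) l,
      WeylAux.pd_add (hGgd a b c) ((hψd b).mul_const _) l,
      WeylAux.pd_mul_const (hψd b) _ l, WeylAux.pd_mul_const (hψd c) _ l]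
    ring
  have hψexp : ∀ a l, pd l (ψ a) x
      = ((N:ℝ)+1)⁻¹ * (pd l (theta gb a) x - pd l (theta g a) x) := by
    intro a l
    have hrep : ∀ y ∈ U, ψ a y = ((N:ℝ)+1)⁻¹ * (theta gb a y - theta g a y) := by
      intro y hy
      rw [hθv a y hy]
      field_simp
      ring
    rw [WeylAux.pd_congr hU hx hrep l,
      WeylAux.pd_const_mul ((hθgbd a).fun_sub (hθgd a)) _ l,
      WeylAux.pd_sub (hθgbd a) (hθgd a) l]
  have hψcurl : ∀ a l, pd l (ψ a) x = pd a (ψ l) x := by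
    intro a l
    rw [hψexp a l, hψexp l a,
      WeylAux.theta_curl hU hg hgsym hginv hx a l,
      WeylAux.theta_curl hU hgb hgbsym hgbinv hx a l]
  have hΓsym : ∀ a b c, christoffel g a b c x = christoffel g a c b x :=
    fun a b c => WeylAux.christoffel_symm hU hgsym hx a b c
  have hsum1 : ∀ (j' n' : Fin N), ∑ α, christoffel gb α j' n' x * theta gb α x
      = (∑ α, christoffel g α j' n' x * theta g α x)
        + ((N:ℝ)+1) * ∑ α, christoffel g α j' n' x * ψ α x
        + ψ j' x * (theta g n' x + ((N:ℝ)+1) * ψ n' x)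
        + ψ n' x * (theta g j' x + ((N:ℝ)+1) * ψ j' x) := by
    intro j' n'
    calc ∑ α, christoffel gb α j' n' x * theta gb α x
        = ∑ α, (christoffel g α j' n' x * theta g α x
            + ((N:ℝ)+1) * (christoffel g α j' n' x * ψ α x)
            + kron α n' * (ψ j' x * (theta g α x + ((N:ℝ)+1) * ψ α x))
            + kron α j' * (ψ n' x * (theta g α x + ((N:ℝ)+1) * ψ α x))) := by
          refine Finset.sum_congr rfl fun α _ => ?_
          rw [hPx α j' n', hθx α]
          ring
      _ = _ := by
          simp only [Finset.sum_add_distrib, ← Finset.mul_sum]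
          rw [WeylAux.sum_kron_snd (fun α => ψ j' x * (theta g α x + ((N:ℝ)+1) * ψ α x)) n',
            WeylAux.sum_kron_snd (fun α => ψ n' x * (theta g α x + ((N:ℝ)+1) * ψ α x)) j']
  have hbpart : ∀ (j' n' : Fin N),
      ((N:ℝ)+1) * thetaD gb j' n' x + theta gb j' x * theta gb n' x
      = (((N:ℝ)+1) * thetaD g j' n' x + theta g j' x * theta g n' x)
        + ((N:ℝ)+1)^2 * (pd n' (ψ j') x - (∑ α, christoffel g α j' n' x * ψ α x)
            - ψ j' x * ψ n' x) := by
    intro j' n'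
    unfold thetaD
    rw [hpdθ j' n', hsum1 j' n', hθx j', hθx n']
    ring
  have hq : ∀ (m' n' : Fin N), ∑ α, christoffel gb α j m' x * christoffel gb i α n' x
      = (∑ α, christoffel g α j m' x * christoffel g i α n' x)
        + kron i n' * (∑ α, christoffel g α j m' x * ψ α x)
        + christoffel g i j m' x * ψ n' x
        + ψ j x * christoffel g i m' n' x
        + kron i n' * (ψ j x * ψ m' x)
        + kron i m' * (ψ j x * ψ n' x)
        + ψ m' x * christoffel g i j n' x
        + kron i n' * (ψ m' x * ψ j x)
        + kron i j * (ψ m' x * ψ n' x) := by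
    intro m' n'
    calc ∑ α, christoffel gb α j m' x * christoffel gb i α n' x
        = ∑ α, (christoffel g α j m' x * christoffel g i α n' x
            + kron i n' * (christoffel g α j m' x * ψ α x)
            + kron i α * (christoffel g α j m' x * ψ n' x)
            + kron α m' * (ψ j x * christoffel g i α n' x)
            + kron α m' * (kron i n' * (ψ j x * ψ α x))
            + kron α m' * (kron i α * (ψ j x * ψ n' x))
            + kron α j * (ψ m' x * christoffel g i α n' x)
            + kron α j * (kron i n' * (ψ m' x * ψ α x))
            + kron α j * (kron i α * (ψ m' x * ψ n' x))) := by
          refine Finset.sum_congr rfl fun α _ => ?_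
          rw [hPx α j m', hPx i α n']
          ring
      _ = _ := by
          simp only [Finset.sum_add_distrib, ← Finset.mul_sum]
          rw [WeylAux.sum_kron_fst (fun α => christoffel g α j m' x * ψ n' x) i,
            WeylAux.sum_kron_snd (fun α => ψ j x * christoffel g i α n' x) m',
            WeylAux.sum_kron_snd (fun α => kron i n' * (ψ j x * ψ α x)) m',
            WeylAux.sum_kron_snd (fun α => kron i α * (ψ j x * ψ n' x)) m',
            WeylAux.sum_kron_snd (fun α => ψ m' x * christoffel g i α n' x) j,
            WeylAux.sum_kron_snd (fun α => kron i n' * (ψ m' x * ψ α x)) j,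
            WeylAux.sum_kron_snd (fun α => kron i α * (ψ m' x * ψ n' x)) j]
  have hacurv : curvS (christoffel gb) i j m n x
      = curvS (christoffel g) i j m n x
        + kron i m * (pd n (ψ j) x - (∑ α, christoffel g α j n x * ψ α x)
            - ψ j x * ψ n x)
        - kron i n * (pd m (ψ j) x - (∑ α, christoffel g α j m x * ψ α x)
            - ψ j x * ψ m x) := by
    unfold curvS
    rw [Finset.sum_sub_distrib, Finset.sum_sub_distrib,
      hpdΓ i j m n, hpdΓ i j n m, hq m n, hq n m, hΓsym i m n, hψcurl m n]
    ring
  unfold weylGeo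
  rw [hacurv, hbpart j n, hbpart j m]
  have h2 : ((N:ℝ)+1)^2 ≠ 0 := pow_ne_zero _ hNe
  field_simp
  ring
end
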